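/- Let n ∈ ℕ, 0 ≤ k ≤ n, and 0 < r ≤ n/2, and set p = r/n. Let X ~ Bin(k, p) and Y ~ Bin(n−k, p) be independent and Z := Y − X, so that E(Z) = (n−2k)·r/n. Then for all Δ > 0: Pr(Z ≤ (n−2k)r/n − Δ) ≤ exp(−Δ²/(2(1−p)(r + Δ/3))) and Pr(Z ≥ (n−2k)r/n + Δ) ≤ exp(−Δ²/(2(1−p)(r + Δ/3))). -/

import Mathlib

/-!
Write `q = 1 - p`. Up to its mean, `Z = Y - X` is a sum of `n` independent centred Bernoulli
variables, each taking the values `-p` and `q` (or `p` and `-q`); since `p ≤ 1/2` all of them are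
at most `q`, and their variances add up to `r q`. Because `(eˣ - 1 - x) / x²` is increasing,
a centred variable `W ≤ b` with variance `σ²` has `E e^{tW} ≤ exp (σ² / b² · (e^{tb} - 1 - tb))`
for `t ≥ 0` (Bennett). Markov's inequality for `e^{tZ}`, the estimate
`eˣ - 1 - x ≤ x² / (2 (1 - x / 3))` and Bernstein's choice `t = Δ / (r q + q Δ / 3)` give the
upper tail. The lower tail is the upper tail with `k` replaced by `n - k`, since exchanging the
roles of one-bits and zero-bits turns `Y - X` into `X - Y`.
-/

open scoped BigOperators

namespace BinomialEstimates

/-- `binP m p a = Pr(Bin(m,p) = a)`, the binomial probability mass function. -/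
noncomputable def binP (m : ℕ) (p : ℝ) (a : ℕ) : ℝ :=
  (m.choose a : ℝ) * p ^ a * (1 - p) ^ (m - a)

/-- `Pr(Y − X ∈ E)` for independent `X ~ Bin(k, p)` and `Y ~ Bin(n−k, p)`;
`Z = Y − X` is the fitness-distance increase under standard bit mutation with
probability `p` of a parent with `k` one-bits. -/
noncomputable def pZ (n k : ℕ) (p : ℝ) (E : ℝ → Prop) [DecidablePred E] : ℝ :=
  ∑ a ∈ Finset.range (k + 1), ∑ b ∈ Finset.range (n - k + 1),
    if E ((b : ℝ) - (a : ℝ)) then binP k p a * binP (n - k) p b else 0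

open Real Set

lemma apply_zero_le_of_hasDerivAt_nonneg {f f' : ℝ → ℝ} (hf : ∀ y, HasDerivAt f (f' y) y)
    (hf' : ∀ y, 0 < y → 0 ≤ f' y) {x : ℝ} (hx : 0 ≤ x) : f 0 ≤ f x :=
  monotoneOn_of_hasDerivWithinAt_nonneg (convex_Ici 0)
    (fun y _ => (hf y).continuousAt.continuousWithinAt)
    (fun y _ => (hf y).hasDerivWithinAt) (by simpa using hf') self_mem_Ici hx hx

lemma sub_two_mul_exp_add_add_two_nonneg {x : ℝ} (hx : 0 ≤ x) :
    0 ≤ (x - 2) * exp x + x + 2 := by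
  have hd : ∀ y, HasDerivAt (fun y => (y - 2) * exp y + y + 2) ((y - 1) * exp y + 1) y :=
    fun y => (((((hasDerivAt_id' y).sub_const 2).mul (hasDerivAt_exp y)).add
      (hasDerivAt_id' y)).add_const 2).congr_deriv (by ring)
  have hd' : ∀ y, 0 < y → 0 ≤ (y - 1) * exp y + 1 := fun y _ => by
    have := mul_le_mul_of_nonneg_right (one_sub_le_exp_neg y) (exp_pos y).le
    rw [← exp_add, neg_add_cancel, exp_zero] at this
    linarith
  simpa using apply_zero_le_of_hasDerivAt_nonneg hd hd' hx

lemma exp_sub_one_sub_le_sq_div_two_of_nonpos {x : ℝ} (hx : x ≤ 0) :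
    exp x - 1 - x ≤ x ^ 2 / 2 := by
  have hd : ∀ u, HasDerivAt (fun u => 1 - u + u ^ 2 / 2 - exp (-u)) (-1 + u + exp (-u)) u :=
    fun u => ((((hasDerivAt_id' u).const_sub 1).add
      ((hasDerivAt_pow 2 u).div_const 2)).sub (hasDerivAt_neg' u).exp).congr_deriv
      (by norm_num)
  have := apply_zero_le_of_hasDerivAt_nonneg hd
    (fun u _ => by linarith [add_one_le_exp (-u)]) (neg_nonneg.2 hx)
  norm_num at this
  linarith

lemma exp_sub_one_sub_mul_three_sub_le {x : ℝ} (hx : 0 ≤ x) :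
    (exp x - 1 - x) * (3 - x) ≤ 3 * x ^ 2 / 2 := by
  have hd : ∀ y, HasDerivAt (fun y => 3 * y ^ 2 / 2 - (exp y - 1 - y) * (3 - y))
      ((y - 2) * exp y + y + 2) y :=
    fun y => ((((hasDerivAt_pow 2 y).const_mul 3).div_const 2).sub
      ((((hasDerivAt_exp y).sub_const 1).sub (hasDerivAt_id' y)).mul
        ((hasDerivAt_id' y).const_sub 3))).congr_deriv (by norm_num; ring)
  have := apply_zero_le_of_hasDerivAt_nonneg hd (fun y hy => sub_two_mul_exp_add_add_two_nonneg hy.le) hx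
  norm_num at this
  linarith

lemma monotoneOn_exp_sub_one_sub_div_sq :
    MonotoneOn (fun x => (exp x - 1 - x) / x ^ 2) (Ioi 0) := by
  have hd : ∀ x ∈ Ioi (0 : ℝ), HasDerivAt (fun x => (exp x - 1 - x) / x ^ 2)
      (x * ((x - 2) * exp x + x + 2) / (x ^ 2) ^ 2) x := fun x hx =>
    ((((hasDerivAt_exp x).sub_const 1).sub (hasDerivAt_id' x)).div (hasDerivAt_pow 2 x)
      (pow_ne_zero 2 (ne_of_gt hx))).congr_deriv (by norm_num; ring)
  refine monotoneOn_of_hasDerivWithinAt_nonneg (convex_Ioi 0)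
    (fun x hx => (hd x hx).continuousAt.continuousWithinAt)
    (fun x hx => (hd x (by rwa [interior_Ioi] at hx)).hasDerivWithinAt) fun x hx => ?_
  rw [interior_Ioi] at hx
  exact div_nonneg (mul_nonneg hx.le (sub_two_mul_exp_add_add_two_nonneg hx.le)) (by positivity)

lemma exp_sub_one_sub_mul_sq_le {x y : ℝ} (hxy : x ≤ y) (hy : 0 ≤ y) :
    (exp x - 1 - x) * y ^ 2 ≤ (exp y - 1 - y) * x ^ 2 := by
  rcases le_or_gt x 0 with hx | hx
  · calc (exp x - 1 - x) * y ^ 2 ≤ x ^ 2 / 2 * y ^ 2 := by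
          gcongr; exact exp_sub_one_sub_le_sq_div_two_of_nonpos hx
      _ = y ^ 2 / 2 * x ^ 2 := by ring
      _ ≤ (exp y - 1 - y) * x ^ 2 := by
          gcongr; linarith [quadratic_le_exp_of_nonneg hy]
  · have h := monotoneOn_exp_sub_one_sub_div_sq hx (hx.trans_le hxy) hxy
    rwa [div_le_div_iff₀ (pow_pos hx 2) (pow_pos (hx.trans_le hxy) 2)] at h

lemma bernoulli_mgf_le {p : ℝ} (hp0 : 0 ≤ p) (hp : p ≤ 1 / 2) (t : ℝ) :
    p * exp t + (1 - p) ≤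
      exp (t * p + p / (1 - p) * (exp (|t| * (1 - p)) - 1 - |t| * (1 - p))) := by
  have hq : 0 < 1 - p := by linarith
  set ψ := exp (|t| * (1 - p)) - 1 - |t| * (1 - p)
  have hcentred : (1 - p) * exp (-(t * p)) + p * exp (t * (1 - p)) ≤ 1 + p / (1 - p) * ψ := by
    rcases eq_or_ne t 0 with rfl | ht
    · simp [ψ]
    have hbound : ∀ w, |w| ≤ 1 - p → (exp (t * w) - 1 - t * w) * (1 - p) ^ 2 ≤ ψ * w ^ 2 := by
      intro w hw
      have := exp_sub_one_sub_mul_sq_le (x := t * w) (y := |t| * (1 - p))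
        ((le_abs_self _).trans (by rw [abs_mul]; gcongr)) (by positivity)
      rw [mul_pow, mul_pow, sq_abs, mul_left_comm, mul_left_comm ψ] at this
      exact le_of_mul_le_mul_left this (by positivity)
    have h₁ := hbound (-p) (by rw [abs_neg, abs_of_nonneg hp0]; linarith)
    have h₂ := hbound (1 - p) (abs_of_pos hq).le
    rw [mul_neg] at h₁
    have h : ((1 - p) * exp (-(t * p)) + p * exp (t * (1 - p)) - 1) * (1 - p) * (1 - p) ≤
        p * ψ * (1 - p) := by
      nlinarith [mul_le_mul_of_nonneg_left h₁ hq.le, mul_le_mul_of_nonneg_left h₂ hp0]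
    rw [div_mul_eq_mul_div, ← sub_le_iff_le_add', le_div_iff₀ hq]
    exact le_of_mul_le_mul_right h hq
  calc p * exp t + (1 - p)
      = exp (t * p) * ((1 - p) * exp (-(t * p)) + p * exp (t * (1 - p))) := by
        have e₁ : exp (t * p) * exp (-(t * p)) = 1 := by rw [← exp_add, add_neg_cancel, exp_zero]
        have e₂ : exp (t * p) * exp (t * (1 - p)) = exp t := by rw [← exp_add]; ring_nf
        linear_combination (-(1 - p)) * e₁ - p * e₂
    _ ≤ exp (t * p) * exp (p / (1 - p) * ψ) := by
        gcongr
        exact hcentred.trans (by linarith [add_one_le_exp (p / (1 - p) * ψ)])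
    _ = _ := (exp_add _ _).symm

lemma exists_bernstein_exponent {v b Δ : ℝ} (hv : 0 < v) (hb : 0 < b) (hΔ : 0 < Δ) :
    ∃ t, 0 ≤ t ∧
      -(t * Δ) + v / b ^ 2 * (exp (t * b) - 1 - t * b) ≤ -(Δ ^ 2 / (2 * (v + b * Δ / 3))) := by
  set s := v + b * Δ / 3
  have hs : 0 < s := by positivity
  refine ⟨Δ / s, by positivity, ?_⟩
  have h3 : 3 - Δ / s * b = 3 * v / s := by field_simp; ring
  have hψ := exp_sub_one_sub_mul_three_sub_le (x := Δ / s * b) (by positivity)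
  rw [h3] at hψ
  have hψ' : v / b ^ 2 * (exp (Δ / s * b) - 1 - Δ / s * b) ≤ Δ ^ 2 / (2 * s) := by
    rw [div_mul_eq_mul_div, div_le_div_iff₀ (by positivity) (by positivity)]
    have := mul_le_mul_of_nonneg_right hψ (by positivity : 0 ≤ 2 * s ^ 2 * b ^ 2 / 3)
    field_simp at this ⊢
    linarith
  have : -(Δ / s * Δ) + Δ ^ 2 / (2 * s) = -(Δ ^ 2 / (2 * s)) := by field_simp; ring
  linarith

lemma binP_nonneg {m : ℕ} {p : ℝ} (hp0 : 0 ≤ p) (hp1 : p ≤ 1) (a : ℕ) : 0 ≤ binP m p a := by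
  unfold binP
  have : 0 ≤ 1 - p := sub_nonneg.2 hp1
  positivity

lemma sum_binP_mul_pow (m : ℕ) (p s : ℝ) :
    ∑ a ∈ Finset.range (m + 1), binP m p a * s ^ a = (p * s + (1 - p)) ^ m := by
  rw [add_pow]
  refine Finset.sum_congr rfl fun a _ => ?_
  unfold binP
  ring

lemma pZ_ge_le_exp_mul (n k : ℕ) {p : ℝ} (hp0 : 0 ≤ p) (hp1 : p ≤ 1) (c : ℝ) {t : ℝ}
    (ht : 0 ≤ t) :
    pZ n k p (c ≤ ·) ≤
      exp (-(t * c)) * ((p * exp (-t) + (1 - p)) ^ k * (p * exp t + (1 - p)) ^ (n - k)) := by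
  rw [← sum_binP_mul_pow, ← sum_binP_mul_pow, Finset.sum_mul_sum, Finset.mul_sum]
  refine Finset.sum_le_sum fun a _ => ?_
  rw [Finset.mul_sum]
  refine Finset.sum_le_sum fun b _ => ?_
  have hmass := mul_nonneg (binP_nonneg (m := k) hp0 hp1 a) (binP_nonneg (m := n - k) hp0 hp1 b)
  have hexp : exp (t * ((b : ℝ) - a - c)) = exp (-(t * c)) * exp (-t) ^ a * exp t ^ b := by
    rw [← exp_nat_mul, ← exp_nat_mul, ← exp_add, ← exp_add]
    ring_nf
  rw [show exp (-(t * c)) * (binP k p a * exp (-t) ^ a * (binP (n - k) p b * exp t ^ b)) =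
    binP k p a * binP (n - k) p b * exp (t * ((b : ℝ) - a - c)) by rw [hexp]; ring]
  split_ifs with h
  · exact le_mul_of_one_le_right hmass (one_le_exp (mul_nonneg ht (by linarith)))
  · positivity

lemma pZ_le_eq_pZ_ge {n k : ℕ} (hk : k ≤ n) (p c : ℝ) :
    pZ n k p (· ≤ c) = pZ n (n - k) p (-c ≤ ·) := by
  unfold pZ
  dsimp only
  rw [Nat.sub_sub_self hk, Finset.sum_comm]
  refine Finset.sum_congr rfl fun a _ => Finset.sum_congr rfl fun b _ => ?_
  split_ifs <;> first | (exfalso; linarith) | rfl | ring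

lemma pZ_ge_add_le {n k : ℕ} (hk : k ≤ n) (hn : 0 < n) {p : ℝ} (hp0 : 0 < p) (hp : p ≤ 1 / 2)
    {Δ : ℝ} (hΔ : 0 < Δ) :
    pZ n k p (((n : ℝ) - 2 * k) * p + Δ ≤ ·) ≤
      exp (-(Δ ^ 2 / (2 * (n * p * (1 - p) + (1 - p) * Δ / 3)))) := by
  have hq : 0 < 1 - p := by linarith
  obtain ⟨t, ht, hexponent⟩ :=
    exists_bernstein_exponent (v := n * p * (1 - p)) (by positivity) hq hΔ
  set ψ := exp (t * (1 - p)) - 1 - t * (1 - p)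
  have hup := bernoulli_mgf_le hp0.le hp t
  have hdown := bernoulli_mgf_le hp0.le hp (-t)
  rw [abs_neg, abs_of_nonneg ht] at hdown
  rw [abs_of_nonneg ht] at hup
  calc pZ n k p (((n : ℝ) - 2 * k) * p + Δ ≤ ·)
      ≤ exp (-(t * (((n : ℝ) - 2 * k) * p + Δ))) *
          ((p * exp (-t) + (1 - p)) ^ k * (p * exp t + (1 - p)) ^ (n - k)) :=
        pZ_ge_le_exp_mul n k hp0.le (by linarith) _ ht
    _ ≤ exp (-(t * (((n : ℝ) - 2 * k) * p + Δ))) *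
          (exp (-t * p + p / (1 - p) * ψ) ^ k * exp (t * p + p / (1 - p) * ψ) ^ (n - k)) := by
        gcongr
    _ = exp (-(t * Δ) + n * p * (1 - p) / (1 - p) ^ 2 * ψ) := by
        rw [← exp_nat_mul, ← exp_nat_mul, ← exp_add, ← exp_add]
        congr 1
        push_cast [Nat.cast_sub hk]
        field_simp
        ring
    _ ≤ _ := exp_le_exp.2 hexponent

/-- **Bernstein-type tail bounds for the fitness-distance change.**
Let `0 ≤ k ≤ n`, `0 < r ≤ n/2` and `p = r/n`. Let `X ~ Bin(k,p)`, `Y ~ Bin(n−k,p)`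
be independent and `Z = Y − X`, so `E(Z) = (n−2k)r/n`. Then for all `Δ > 0`,
`Pr(Z ≤ (n−2k)r/n − Δ)` and `Pr(Z ≥ (n−2k)r/n + Δ)` are both at most
`exp(−Δ²/(2(1−p)(r + Δ/3)))`. -/
theorem bernstein_fitness_change (n k : ℕ) (hk : k ≤ n) (r : ℝ) (hr0 : 0 < r)
    (hr : r ≤ (n : ℝ) / 2) (Δ : ℝ) (hΔ : 0 < Δ) :
    pZ n k (r / n) (fun z => z ≤ ((n : ℝ) - 2 * k) * r / n - Δ) ≤
        Real.exp (-(Δ ^ 2 / (2 * (1 - r / n) * (r + Δ / 3)))) ∧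
      pZ n k (r / n) (fun z => ((n : ℝ) - 2 * k) * r / n + Δ ≤ z) ≤
        Real.exp (-(Δ ^ 2 / (2 * (1 - r / n) * (r + Δ / 3)))) := by
  have hnR : (0 : ℝ) < n := by linarith
  have hp : r / n ≤ 1 / 2 := by rw [div_le_iff₀ hnR]; linarith
  have hden : 2 * (n * (r / n) * (1 - r / n) + (1 - r / n) * Δ / 3) =
      2 * (1 - r / n) * (r + Δ / 3) := by field_simp
  have htail : ∀ j ≤ n, pZ n j (r / n) (fun z => ((n : ℝ) - 2 * j) * r / n + Δ ≤ z) ≤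
      Real.exp (-(Δ ^ 2 / (2 * (1 - r / n) * (r + Δ / 3)))) := fun j hj => by
    have h := pZ_ge_add_le hj (by exact_mod_cast hnR) (by positivity) hp hΔ
    rwa [hden, ← mul_div_assoc] at h
  refine ⟨?_, htail k hk⟩
  rw [pZ_le_eq_pZ_ge hk]
  convert htail (n - k) (Nat.sub_le n k) using 4
  push_cast [Nat.cast_sub hk]
  ring

end BinomialEstimates
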